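/- Scott's parallel OR is not definable in the simply typed λ-calculus with booleans: there is no simply typed λ-term O : Bool → Bool → Bool such that, under the standard reduction semantics, O F F reduces to F while O u T reduces to T and O T u reduces to T for every term u (including free variables u). -/

import Mathlib

/-- Types: the base type of booleans and function types. -/
inductive Ty : Type
  | bool : Ty
  | arrow : Ty → Ty → Ty

/-- Terms of the simply typed λ-calculus with booleans (de Bruijn indices),
with constants `T`, `F` and an if-then-else construct. -/
inductive Tm : Type
  | var : ℕ → Tm
  | lam : Ty → Tm → Tm
  | app : Tm → Tm → Tm
  | tt : Tm
  | ff : Tm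
  | ite : Tm → Tm → Tm → Tm

/-- Shift free de Bruijn variables `≥ c` up by one. -/
def shift (c : ℕ) : Tm → Tm
  | .var n => if n < c then .var n else .var (n + 1)
  | .lam A t => .lam A (shift (c + 1) t)
  | .app t u => .app (shift c t) (shift c u)
  | .tt => .tt
  | .ff => .ff
  | .ite t u v => .ite (shift c t) (shift c u) (shift c v)

/-- Substitution of `s` for variable `k`. -/
def subst (k : ℕ) (s : Tm) : Tm → Tm
  | .var n => if n < k then .var n else if n = k then s else .var (n - 1)
  | .lam A t => .lam A (subst (k + 1) (shift 0 s) t)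
  | .app t u => .app (subst k s t) (subst k s u)
  | .tt => .tt
  | .ff => .ff
  | .ite t u v => .ite (subst k s t) (subst k s u) (subst k s v)

/-- Typing judgment. -/
inductive HasTy : List Ty → Tm → Ty → Prop
  | var {Γ n A} : Γ[n]? = some A → HasTy Γ (.var n) A
  | lam {Γ A B t} : HasTy (A :: Γ) t B → HasTy Γ (.lam A t) (Ty.arrow A B)
  | app {Γ A B t u} : HasTy Γ t (Ty.arrow A B) → HasTy Γ u A → HasTy Γ (.app t u) B
  | tt {Γ} : HasTy Γ .tt .bool
  | ff {Γ} : HasTy Γ .ff .bool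
  | ite {Γ A c t u} : HasTy Γ c .bool → HasTy Γ t A → HasTy Γ u A →
      HasTy Γ (.ite c t u) A

/-- Standard reduction: β-reduction and the if-then-else rules, applied anywhere. -/
inductive Step : Tm → Tm → Prop
  | beta {A t u} : Step (.app (.lam A t) u) (subst 0 u t)
  | iteT {t u} : Step (.ite .tt t u) t
  | iteF {t u} : Step (.ite .ff t u) u
  | congLam {A t t'} : Step t t' → Step (.lam A t) (.lam A t')
  | congAppL {t t' u} : Step t t' → Step (.app t u) (.app t' u)
  | congAppR {t u u'} : Step u u' → Step (.app t u) (.app t u')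
  | congIte₀ {t t' u v} : Step t t' → Step (.ite t u v) (.ite t' u v)
  | congIte₁ {t u u' v} : Step u u' → Step (.ite t u v) (.ite t u' v)
  | congIte₂ {t u v v'} : Step v v' → Step (.ite t u v) (.ite t u v')


/-!
Sieber's sequentiality relation is a ternary logical relation which at `bool` relates `t₁, t₂, t₃`
when `t₁` or `t₂` never produces a value, or all three reduce to the same boolean. It is closed
under the constructs of the calculus, so every closed term of type `bool → bool → bool` preserves
it. For a variable `x`, which never produces a value, the triples `(x, T, F)` and `(T, x, F)` are
related. A parallel OR `O` sends them to `(O x T, O T x, O F F)`, which reduces to `(T, T, F)`: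
its first two components do produce values, and by confluence `O F F` cannot reduce to both `T`
and `F`, so this triple is not related.
-/

theorem shift_shift (t : Tm) {c c' : ℕ} (h : c' ≤ c) :
    shift (c + 1) (shift c' t) = shift c' (shift c t) := by
  induction t generalizing c c' with
  | var => grind [shift]
  | _ => simp_all [shift]

theorem subst_shift (t s : Tm) (k : ℕ) : subst k s (shift k t) = t := by
  induction t generalizing k s with
  | var => grind [shift, subst]
  | _ => simp_all [shift, subst]

theorem shift_subst_of_le (t s : Tm) {k c : ℕ} (h : k ≤ c) :
    shift c (subst k s t) = subst k (shift c s) (shift (c + 1) t) := by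
  induction t generalizing s k c with
  | var => grind [shift, subst]
  | lam A t ih => simp [shift, subst, ih _ (Nat.succ_le_succ h), shift_shift _ (Nat.zero_le c)]
  | _ => simp_all [shift, subst]

theorem shift_subst_of_ge (t s : Tm) {k c : ℕ} (h : c ≤ k) :
    shift c (subst k s t) = subst (k + 1) (shift c s) (shift c t) := by
  induction t generalizing s k c with
  | var => grind [shift, subst]
  | lam A t ih => simp [shift, subst, ih _ (Nat.succ_le_succ h), shift_shift _ (Nat.zero_le c)]
  | _ => simp_all [shift, subst]

theorem subst_subst (t u s : Tm) {i k : ℕ} (h : i ≤ k) :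
    subst k s (subst i u t) = subst i (subst k s u) (subst (k + 1) (shift i s) t) := by
  induction t generalizing u s i k with
  | var => grind [shift, subst, subst_shift]
  | lam A t ih =>
    simp [subst, ih _ _ (Nat.succ_le_succ h), shift_subst_of_ge _ _ (Nat.zero_le k),
      shift_shift _ (Nat.zero_le i)]
  | _ => simp_all [subst]

abbrev Red := Relation.ReflTransGen Step

theorem red_lam {A : Ty} {t t' : Tm} (h : Red t t') : Red (.lam A t) (.lam A t') :=
  h.lift _ fun _ _ => .congLam

theorem red_app {t t' u u' : Tm} (ht : Red t t') (hu : Red u u') :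
    Red (.app t u) (.app t' u') :=
  (ht.lift (Tm.app · u) fun _ _ => Step.congAppL).trans
    (hu.lift (Tm.app t') fun _ _ => Step.congAppR)

theorem red_ite {c c' u u' v v' : Tm} (hc : Red c c') (hu : Red u u') (hv : Red v v') :
    Red (.ite c u v) (.ite c' u' v') :=
  (hc.lift (Tm.ite · u v) fun _ _ => Step.congIte₀).trans <|
    (hu.lift (Tm.ite c' · v) fun _ _ => Step.congIte₁).trans
      (hv.lift (Tm.ite c' u') fun _ _ => Step.congIte₂)

/-- Parallel reduction. -/
inductive Par : Tm → Tm → Prop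
  | var {n} : Par (.var n) (.var n)
  | tt : Par .tt .tt
  | ff : Par .ff .ff
  | lam {A t t'} : Par t t' → Par (.lam A t) (.lam A t')
  | app {t t' u u'} : Par t t' → Par u u' → Par (.app t u) (.app t' u')
  | ite {c c' u u' v v'} : Par c c' → Par u u' → Par v v' → Par (.ite c u v) (.ite c' u' v')
  | beta {A t t' u u'} : Par t t' → Par u u' → Par (.app (.lam A t) u) (subst 0 u' t')
  | iteT {u u' v} : Par u u' → Par (.ite .tt u v) u'
  | iteF {u v v'} : Par v v' → Par (.ite .ff u v) v'

namespace Par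

theorem refl : (t : Tm) → Par t t
  | .var _ => .var
  | .tt => .tt
  | .ff => .ff
  | .lam _ t => .lam (refl t)
  | .app t u => .app (refl t) (refl u)
  | .ite c u v => .ite (refl c) (refl u) (refl v)

theorem of_step {t u : Tm} (h : Step t u) : Par t u := by
  induction h with
  | beta => exact .beta (refl _) (refl _)
  | iteT => exact .iteT (refl _)
  | iteF => exact .iteF (refl _)
  | congLam _ ih => exact .lam ih
  | congAppL _ ih => exact .app ih (refl _)
  | congAppR _ ih => exact .app (refl _) ih
  | congIte₀ _ ih => exact .ite ih (refl _) (refl _)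
  | congIte₁ _ ih => exact .ite (refl _) ih (refl _)
  | congIte₂ _ ih => exact .ite (refl _) (refl _) ih

theorem red {t u : Tm} (h : Par t u) : Red t u := by
  induction h with
  | var | tt | ff => exact .refl
  | lam _ ih => exact red_lam ih
  | app _ _ iht ihu => exact red_app iht ihu
  | ite _ _ _ ihc ihu ihv => exact red_ite ihc ihu ihv
  | beta _ _ iht ihu => exact (red_app (red_lam iht) ihu).tail .beta
  | iteT _ ih | iteF _ ih => exact .head (by constructor) ih

theorem shift {t t' : Tm} (h : Par t t') (c : ℕ) : Par (shift c t) (shift c t') := by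
  induction h generalizing c with
  | var => exact refl _
  | tt => exact .tt
  | ff => exact .ff
  | lam _ ih => exact .lam (ih _)
  | app _ _ iht ihu => exact .app (iht c) (ihu c)
  | ite _ _ _ ihc ihu ihv => exact .ite (ihc c) (ihu c) (ihv c)
  | beta _ _ iht ihu =>
      rw [shift_subst_of_le _ _ (Nat.zero_le c)]
      exact .beta (iht _) (ihu c)
  | iteT _ ih => exact .iteT (ih c)
  | iteF _ ih => exact .iteF (ih c)

theorem subst {t t' s s' : Tm} (h : Par t t') (hs : Par s s') (k : ℕ) :
    Par (subst k s t) (subst k s' t') := by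
  induction h generalizing k s s' with
  | var => simp only [_root_.subst]; split_ifs <;> first | exact refl _ | exact hs
  | tt => exact .tt
  | ff => exact .ff
  | lam _ ih => exact .lam (ih (hs.shift 0) _)
  | app _ _ iht ihu => exact .app (iht hs k) (ihu hs k)
  | ite _ _ _ ihc ihu ihv => exact .ite (ihc hs k) (ihu hs k) (ihv hs k)
  | beta _ _ iht ihu =>
      rw [_root_.subst, subst_subst _ _ _ (Nat.zero_le k)]
      exact .beta (iht (hs.shift 0) _) (ihu hs k)
  | iteT _ ih => exact .iteT (ih hs k)
  | iteF _ ih => exact .iteF (ih hs k)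

end Par

/-- Takahashi's complete development: every redex of the term is contracted at once. -/
def dev : Tm → Tm
  | .var n => .var n
  | .tt => .tt
  | .ff => .ff
  | .lam A t => .lam A (dev t)
  | .app (.lam _ b) u => subst 0 (dev u) (dev b)
  | .app t u => .app (dev t) (dev u)
  | .ite .tt u _ => dev u
  | .ite .ff _ v => dev v
  | .ite c u v => .ite (dev c) (dev u) (dev v)

theorem Par.to_dev {t u : Tm} (h : Par t u) : Par u (dev t) := by
  induction h with
  | var => exact .var
  | tt => exact .tt
  | ff => exact .ff
  | lam _ ih => exact .lam ih
  | app ht _ iht ihu =>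
      cases ht with
      | lam => cases iht with | lam hb => exact .beta hb ihu
      | _ => exact .app iht ihu
  | ite hc _ _ ihc ihu ihv =>
      cases hc with
      | tt => exact .iteT ihu
      | ff => exact .iteF ihv
      | _ => exact .ite ihc ihu ihv
  | beta _ _ iht ihu => exact iht.subst ihu 0
  | iteT _ ih | iteF _ ih => exact ih

theorem red_confluent {t u v : Tm} (hu : Red t u) (hv : Red t v) : ∃ w, Red u w ∧ Red v w := by
  obtain ⟨w, hu', hv'⟩ := Relation.church_rosser
    (fun t u v hu hv => ⟨dev t, .single hu.to_dev, .single hv.to_dev⟩)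
    (Relation.ReflTransGen.mono (fun _ _ => Par.of_step) _ _ hu)
    (Relation.ReflTransGen.mono (fun _ _ => Par.of_step) _ _ hv)
  exact ⟨w, hu'.lift' id fun _ _ => Par.red, hv'.lift' id fun _ _ => Par.red⟩

def IsValue : Tm → Prop
  | .tt | .ff | .lam _ _ => True
  | _ => False

def NeverValue (t : Tm) : Prop := ∀ w, Red t w → ¬ IsValue w

theorem IsValue.red {v w : Tm} (hv : IsValue v) (h : Red v w) : IsValue w := by
  induction h with
  | refl => exact hv
  | tail _ h ih => cases h <;> trivial

theorem eq_of_red_of_forall_not_step {t w : Tm} (ht : ∀ u, ¬ Step t u) (h : Red t w) : w = t :=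
  match h.cases_head with
  | .inl e => e.symm
  | .inr ⟨u, hu, _⟩ => absurd hu (ht u)

theorem not_red_tt_and_red_ff {t : Tm} : ¬ (Red t .tt ∧ Red t .ff) := by
  rintro ⟨htt, hff⟩
  obtain ⟨w, htt', hff'⟩ := red_confluent htt hff
  have hw_tt : w = .tt := eq_of_red_of_forall_not_step (fun _ h => by cases h) htt'
  have hw_ff : w = .ff := eq_of_red_of_forall_not_step (fun _ h => by cases h) hff'
  cases hw_tt.symm.trans hw_ff

theorem NeverValue.of_red {t t' : Tm} (h : Red t t') (ht' : NeverValue t') : NeverValue t :=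
  fun _ hw hv =>
    let ⟨z, hz, hwz⟩ := red_confluent h hw
    ht' z hz (hv.red hwz)

theorem neverValue_var (n : ℕ) : NeverValue (.var n) := by
  intro _ hw
  rw [eq_of_red_of_forall_not_step (fun _ h => by cases h) hw]
  exact id

theorem red_app_inv {s a w : Tm} (h : Red (.app s a) w) :
    (∃ s' a', w = .app s' a' ∧ Red s s') ∨ ∃ A b, Red s (.lam A b) := by
  induction h with
  | refl => exact .inl ⟨s, a, rfl, .refl⟩
  | tail _ hstep ih =>
      rcases ih with ⟨s', a', rfl, hs⟩ | hlam
      · cases hstep with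
        | beta => exact .inr ⟨_, _, hs⟩
        | congAppL h => exact .inl ⟨_, _, rfl, hs.tail h⟩
        | congAppR => exact .inl ⟨_, _, rfl, hs⟩
      · exact .inr hlam

theorem red_ite_inv {c u v w : Tm} (h : Red (.ite c u v) w) :
    (∃ c' u' v', w = .ite c' u' v' ∧ Red c c') ∨ Red c .tt ∨ Red c .ff := by
  induction h with
  | refl => exact .inl ⟨c, u, v, rfl, .refl⟩
  | tail _ hstep ih =>
      rcases ih with ⟨c', u', v', rfl, hc⟩ | hbool
      · cases hstep with
        | iteT => exact .inr (.inl hc)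
        | iteF => exact .inr (.inr hc)
        | congIte₀ h => exact .inl ⟨_, _, _, rfl, hc.tail h⟩
        | congIte₁ | congIte₂ => exact .inl ⟨_, _, _, rfl, hc⟩
      · exact .inr hbool

theorem NeverValue.app {s : Tm} (hs : NeverValue s) (a : Tm) : NeverValue (.app s a) := by
  intro w hw hv
  rcases red_app_inv hw with ⟨_, _, rfl, -⟩ | ⟨A, b, hb⟩
  · exact hv
  · exact hs _ hb trivial

theorem NeverValue.ite {c : Tm} (hc : NeverValue c) (u v : Tm) : NeverValue (.ite c u v) := by
  intro w hw hv
  rcases red_ite_inv hw with ⟨_, _, _, rfl, -⟩ | htt | hff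
  · exact hv
  · exact hc _ htt trivial
  · exact hc _ hff trivial

def extendSubst (a : Tm) (σ : ℕ → Tm) : ℕ → Tm
  | 0 => a
  | n + 1 => σ n

def liftSubst (σ : ℕ → Tm) : ℕ → Tm :=
  extendSubst (.var 0) fun n => shift 0 (σ n)

def msubst (σ : ℕ → Tm) : Tm → Tm
  | .var n => σ n
  | .lam A t => .lam A (msubst (liftSubst σ) t)
  | .app t u => .app (msubst σ t) (msubst σ u)
  | .tt => .tt
  | .ff => .ff
  | .ite c u v => .ite (msubst σ c) (msubst σ u) (msubst σ v)

theorem msubst_var (t : Tm) : msubst .var t = t := by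
  have lift_var : liftSubst .var = .var := by
    funext n; cases n <;> simp [liftSubst, extendSubst, shift]
  induction t <;> simp_all [msubst]

theorem subst_msubst (t s : Tm) (k : ℕ) (σ : ℕ → Tm) :
    subst k s (msubst σ t) = msubst (fun n => subst k s (σ n)) t := by
  induction t generalizing k s σ with
  | lam A t ih =>
      have : (fun n => subst (k + 1) (shift 0 s) (liftSubst σ n)) =
          liftSubst fun n => subst k s (σ n) := by
        funext n
        cases n <;> simp [liftSubst, extendSubst, subst, shift_subst_of_ge _ _ (Nat.zero_le k)]
      simp [msubst, subst, ih, this]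
  | _ => simp_all [msubst, subst]

theorem subst_msubst_liftSubst (t a : Tm) (σ : ℕ → Tm) :
    subst 0 a (msubst (liftSubst σ) t) = msubst (extendSubst a σ) t := by
  rw [subst_msubst]
  congr
  funext n
  cases n <;> simp [liftSubst, extendSubst, subst, subst_shift]

def SeqRel : Ty → Tm → Tm → Tm → Prop
  | .bool, t₁, t₂, t₃ => NeverValue t₁ ∨ NeverValue t₂ ∨
      (Red t₁ .tt ∧ Red t₂ .tt ∧ Red t₃ .tt) ∨ (Red t₁ .ff ∧ Red t₂ .ff ∧ Red t₃ .ff)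
  | .arrow A B, t₁, t₂, t₃ => ∀ a₁ a₂ a₃, SeqRel A a₁ a₂ a₃ →
      SeqRel B (.app t₁ a₁) (.app t₂ a₂) (.app t₃ a₃)

namespace SeqRel

theorem of_red {A : Ty} {t₁ t₂ t₃ t₁' t₂' t₃' : Tm} (h₁ : Red t₁ t₁') (h₂ : Red t₂ t₂')
    (h₃ : Red t₃ t₃') (h : SeqRel A t₁' t₂' t₃') : SeqRel A t₁ t₂ t₃ := by
  induction A generalizing t₁ t₂ t₃ t₁' t₂' t₃' with
  | bool =>
      rcases h with h | h | ⟨h₁', h₂', h₃'⟩ | ⟨h₁', h₂', h₃'⟩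
      · exact .inl (h.of_red h₁)
      · exact .inr (.inl (h.of_red h₂))
      · exact .inr (.inr (.inl ⟨h₁.trans h₁', h₂.trans h₂', h₃.trans h₃'⟩))
      · exact .inr (.inr (.inr ⟨h₁.trans h₁', h₂.trans h₂', h₃.trans h₃'⟩))
  | arrow A B _ ihB =>
      exact fun a₁ a₂ a₃ ha =>
        ihB (red_app h₁ .refl) (red_app h₂ .refl) (red_app h₃ .refl) (h a₁ a₂ a₃ ha)

theorem of_neverValue_fst {A : Ty} {t₁ : Tm} (h : NeverValue t₁) (t₂ t₃ : Tm) :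
    SeqRel A t₁ t₂ t₃ := by
  induction A generalizing t₁ t₂ t₃ with
  | bool => exact .inl h
  | arrow A B _ ihB => exact fun a₁ _ _ _ => ihB (h.app a₁) _ _

theorem of_neverValue_snd {A : Ty} {t₂ : Tm} (t₁ : Tm) (h : NeverValue t₂) (t₃ : Tm) :
    SeqRel A t₁ t₂ t₃ := by
  induction A generalizing t₁ t₂ t₃ with
  | bool => exact .inr (.inl h)
  | arrow A B _ ihB => exact fun _ a₂ _ _ => ihB _ (h.app a₂) _

theorem ite {A : Ty} {c₁ c₂ c₃ u₁ u₂ u₃ v₁ v₂ v₃ : Tm} (hc : SeqRel .bool c₁ c₂ c₃)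
    (hu : SeqRel A u₁ u₂ u₃) (hv : SeqRel A v₁ v₂ v₃) :
    SeqRel A (.ite c₁ u₁ v₁) (.ite c₂ u₂ v₂) (.ite c₃ u₃ v₃) := by
  rcases hc with h | h | ⟨h₁, h₂, h₃⟩ | ⟨h₁, h₂, h₃⟩
  · exact of_neverValue_fst (h.ite u₁ v₁) _ _
  · exact of_neverValue_snd _ (h.ite u₂ v₂) _
  · exact hu.of_red ((red_ite h₁ .refl .refl).tail .iteT)
      ((red_ite h₂ .refl .refl).tail .iteT) ((red_ite h₃ .refl .refl).tail .iteT)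
  · exact hv.of_red ((red_ite h₁ .refl .refl).tail .iteF)
      ((red_ite h₂ .refl .refl).tail .iteF) ((red_ite h₃ .refl .refl).tail .iteF)

end SeqRel

theorem HasTy.seqRel {Γ : List Ty} {t : Tm} {A : Ty} (h : HasTy Γ t A) {σ₁ σ₂ σ₃ : ℕ → Tm}
    (hσ : ∀ n B, Γ[n]? = some B → SeqRel B (σ₁ n) (σ₂ n) (σ₃ n)) :
    SeqRel A (msubst σ₁ t) (msubst σ₂ t) (msubst σ₃ t) := by
  induction h generalizing σ₁ σ₂ σ₃ with
  | var hn => exact hσ _ _ hn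
  | lam _ ih =>
      intro a₁ a₂ a₃ ha
      have hext : SeqRel _ (msubst (extendSubst a₁ σ₁) _) (msubst (extendSubst a₂ σ₂) _)
          (msubst (extendSubst a₃ σ₃) _) := ih fun
        | 0, _, hB => by cases hB; exact ha
        | n + 1, B, hB => hσ n B hB
      rw [← subst_msubst_liftSubst, ← subst_msubst_liftSubst, ← subst_msubst_liftSubst] at hext
      exact hext.of_red (.single .beta) (.single .beta) (.single .beta)
  | app _ _ iht ihu => exact iht hσ _ _ _ (ihu hσ)
  | tt => exact .inr (.inr (.inl ⟨.refl, .refl, .refl⟩))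
  | ff => exact .inr (.inr (.inr ⟨.refl, .refl, .refl⟩))
  | ite _ _ _ ihc iht ihu => exact SeqRel.ite (ihc hσ) (iht hσ) (ihu hσ)

/-- Scott's parallel OR is not definable in the simply typed λ-calculus with
booleans: there is no simply typed term `O : Bool → Bool → Bool` such that
`O F F` reduces to `F`, while `O u T` and `O T u` reduce to `T` for every term
`u` (including free variables). -/
theorem no_parallel_or :
    ¬ ∃ O : Tm, HasTy [] O (Ty.arrow .bool (Ty.arrow .bool .bool)) ∧
      Relation.ReflTransGen Step (.app (.app O .ff) .ff) .ff ∧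
      (∀ u : Tm, Relation.ReflTransGen Step (.app (.app O u) .tt) .tt) ∧
      (∀ u : Tm, Relation.ReflTransGen Step (.app (.app O .tt) u) .tt) := by
  rintro ⟨O, hO, hFF, hxT, hTx⟩
  have hO_rel : SeqRel (.arrow .bool (.arrow .bool .bool)) O O O := by
    simpa only [msubst_var] using hO.seqRel (σ₁ := .var) (σ₂ := .var) (σ₃ := .var) nofun
  have hx : NeverValue (.var 0) := neverValue_var 0
  rcases hO_rel _ _ _ (.inl hx) _ _ _ (.inr (.inl hx)) with h | h | ⟨-, -, h⟩ | ⟨h, -, -⟩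
  · exact h _ (hxT (.var 0)) trivial
  · exact h _ (hTx (.var 0)) trivial
  · exact not_red_tt_and_red_ff ⟨h, hFF⟩
  · exact not_red_tt_and_red_ff ⟨hxT (.var 0), h⟩
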